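/- There is a bijection between the set ~FY(B_n) = {(∅ = F_0 ⊊ F_1 ⊊ ... ⊊ F_k ⊆ [n], (a_1,...,a_k)) : 1 ≤ a_1 ≤ |F_1|, 1 ≤ a_i ≤ |F_i|−|F_{i−1}|−1 for i ≥ 2} (together with the empty monomial) and the set of extended codes of length n, which sends total degree Σ a_i to index + 1 and is equivariant for the natural S_n-actions. -/

import Mathlib

open Finset

/-- occurrences of the finite value `k` in `α` (`none` plays the role of `∞`) -/
def occE {n : ℕ} (α : Fin n → Option ℕ) (k : ℕ) : ℕ :=
  (Finset.univ.filter fun i => α i = some k).card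

/-- maximum finite entry of `α` -/
def maxValE {n : ℕ} (α : Fin n → Option ℕ) : ℕ :=
  Finset.univ.sup fun i => (α i).getD 0

/-- `(α, f)` is an extended code -/
def IsExtCode {n : ℕ} (α : Fin n → Option ℕ) (f : ℕ → ℕ) : Prop :=
  (∀ k, 1 ≤ k → k ≤ maxValE α → 2 ≤ occE α k) ∧
  (∀ k, 1 ≤ k → k ≤ maxValE α → 1 ≤ f k ∧ f k ≤ occE α k - 1) ∧
  (∀ k, k = 0 ∨ maxValE α < k → f k = 0)

/-- the index of an extended code: `-1` if all entries are `∞`, else `Σ f k` -/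
def extIndex {n : ℕ} (α : Fin n → Option ℕ) (f : ℕ → ℕ) : ℤ :=
  if ∀ i, α i = none then -1 else ((∑ k ∈ Finset.Icc 1 (maxValE α), f k : ℕ) : ℤ)

/-- extended codes of length `n` -/
def ExtCode (n : ℕ) := {p : (Fin n → Option ℕ) × (ℕ → ℕ) // IsExtCode p.1 p.2}

/-- the previous set `F (i-1)` in a chain, with `F (-1) = ∅` -/
def prevSet {n k : ℕ} (F : Fin k → Finset (Fin n)) (i : Fin k) : Finset (Fin n) :=
  if h : 0 < (i : ℕ) then F ⟨(i : ℕ) - 1, Nat.lt_of_le_of_lt (Nat.sub_le _ _) i.isLt⟩ else ∅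

/-- Feichtner--Yuzvinsky basis data for the Chow ring of the Boolean matroid:
a strictly increasing chain `∅ = F₀ ⊊ F₁ ⊊ ⋯ ⊊ F_k ⊆ [n]` together with exponents
`1 ≤ aᵢ ≤ |Fᵢ| - |Fᵢ₋₁| - 1`. -/
def IsFY {n : ℕ} (p : Σ k : ℕ, (Fin k → Finset (Fin n)) × (Fin k → ℕ)) : Prop :=
  StrictMono p.2.1 ∧
  ∀ i : Fin p.1, 1 ≤ p.2.2 i ∧ p.2.2 i + (prevSet p.2.1 i).card < (p.2.1 i).card

/-- total degree `Σ aᵢ` of the monomial data -/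
def FYdeg {n : ℕ} (p : Σ k : ℕ, (Fin k → Finset (Fin n)) × (Fin k → ℕ)) : ℕ :=
  ∑ i, p.2.2 i

/-- the set `FY(B_n)` -/
def FYBn (n : ℕ) := {p : Σ k : ℕ, (Fin k → Finset (Fin n)) × (Fin k → ℕ) // IsFY p}

/-- the action of a permutation of `[n]` on monomial data, replacing each `Fᵢ` by its image -/
def permFY {n : ℕ} (σ : Equiv.Perm (Fin n))
    (p : Σ k : ℕ, (Fin k → Finset (Fin n)) × (Fin k → ℕ)) :
    Σ k : ℕ, (Fin k → Finset (Fin n)) × (Fin k → ℕ) :=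
  ⟨p.1, fun i => (p.2.1 i).image σ, p.2.2⟩

/-- Feichtner--Yuzvinsky-type basis data for the augmented Chow ring of `B_n`:
a strictly increasing chain `∅ = F₀ ⊊ F₁ ⊊ ⋯ ⊊ F_k ⊆ [n]` together with exponents
`1 ≤ a₁ ≤ |F₁|` and `1 ≤ aᵢ ≤ |Fᵢ| - |Fᵢ₋₁| - 1` for `i ≥ 2`
(the case `k = 0` is the empty monomial). -/
def IsAugFY {n : ℕ} (p : Σ k : ℕ, (Fin k → Finset (Fin n)) × (Fin k → ℕ)) : Prop :=
  StrictMono p.2.1 ∧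
  ∀ i : Fin p.1, 1 ≤ p.2.2 i ∧
    (if (i : ℕ) = 0 then p.2.2 i ≤ (p.2.1 i).card
     else p.2.2 i + (prevSet p.2.1 i).card < (p.2.1 i).card)

/-- the set `~FY(B_n)` -/
def AugFYBn (n : ℕ) := {p : Σ k : ℕ, (Fin k → Finset (Fin n)) × (Fin k → ℕ) // IsAugFY p}

/-!
A strictly increasing chain `F₀ ⊊ ⋯ ⊊ F_{k-1}` in `[n]` is determined by its level function,
which sends `x` to the least `j` with `x ∈ F_j` (`none` if there is none), and
`|F_j| - |F_{j-1}|` is the number of elements of level `j`. So `~FY(B_n)` is the set of level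
functions taking exactly the levels `0, …, k-1`, with exponents `1 ≤ a_j ≤ #level j`, one less
for `j > 0`. These become extended codes by raising every level by one exactly when `a₀ ≥ 2`:
then `f 1 = a₀ - 1` fits under the `#level 0 ≥ 2` occurrences of `1`, while for `a₀ = 1` the
exponent `a₀` is dropped and level `0` carries none. Whether `0` occurs in the code tells which
case we are in, so this is a bijection, and in both cases `Σ f = Σ a - 1`. Permuting `[n]`
transports the level function and leaves the exponents alone, which gives the equivariance.
-/

variable {n k : ℕ}

lemma sum_range_succ_eq_add_sum_Icc {M : Type*} [AddCommMonoid M] (f : ℕ → M) (m : ℕ) :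
    ∑ v ∈ range (m + 1), f v = f 0 + ∑ v ∈ Icc 1 m, f v := by
  rw [Nat.range_succ_eq_Icc_zero, Icc_eq_cons_Ioc (Nat.zero_le m), sum_cons,
    ← Icc_add_one_left_eq_Ioc, zero_add]

section Codes

variable {α : Fin n → Option ℕ} {x : Fin n} {v : ℕ}

lemma occE_pos_iff : 0 < occE α v ↔ ∃ x, α x = some v := by
  simp [occE, card_pos, filter_nonempty_iff]

lemma le_maxValE (h : α x = some v) : v ≤ maxValE α := by
  simpa [maxValE, h] using le_sup (f := fun i => (α i).getD 0) (mem_univ x)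

lemma maxValE_le {m : ℕ} (h : ∀ x v, α x = some v → v ≤ m) : maxValE α ≤ m :=
  Finset.sup_le fun x _ => by
    cases hx : α x with
    | none => simp
    | some v => simpa using h x v hx

end Codes

section Levels

open Classical in
noncomputable def levelOf (F : Fin k → Finset (Fin n)) (x : Fin n) : Option ℕ :=
  if h : ∃ j, ∃ hj : j < k, x ∈ F ⟨j, hj⟩ then some (Nat.find h) else none

open Classical in
noncomputable def chainOfLevel (lev : Fin n → Option ℕ) (k : ℕ) : Fin k → Finset (Fin n) :=
  fun i => univ.filter fun x => ∃ j ∈ lev x, j ≤ i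

variable {F : Fin k → Finset (Fin n)} {x : Fin n} {j : ℕ}

lemma levelOf_eq_some_iff :
    levelOf F x = some j ↔
      ∃ hj : j < k, x ∈ F ⟨j, hj⟩ ∧ ∀ i < j, ∀ hi : i < k, x ∉ F ⟨i, hi⟩ := by
  classical
  unfold levelOf
  split_ifs with h
  · rw [Option.some_inj, Nat.find_eq_iff]
    simp
  · simp only [false_iff, not_exists, not_and]
    exact fun hj hx _ => h ⟨j, hj, hx⟩

lemma lt_of_levelOf_eq_some (h : levelOf F x = some j) : j < k :=
  (levelOf_eq_some_iff.1 h).1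

lemma mem_iff_exists_levelOf_le (hF : Monotone F) (i : Fin k) :
    x ∈ F i ↔ ∃ j ∈ levelOf F x, j ≤ i := by
  classical
  constructor
  · intro hx
    have h : ∃ j, ∃ hj : j < k, x ∈ F ⟨j, hj⟩ := ⟨i, i.2, hx⟩
    refine ⟨Nat.find h, dif_pos h, Nat.find_min' h ⟨i.2, hx⟩⟩
  · rintro ⟨j, hj, hji⟩
    obtain ⟨hjk, hxj, -⟩ := levelOf_eq_some_iff.1 hj
    exact hF (Fin.mk_le_mk.2 hji : (⟨j, hjk⟩ : Fin k) ≤ i) hxj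

lemma mem_prevSet_iff (hF : Monotone F) (i : Fin k) :
    x ∈ prevSet F i ↔ ∃ j ∈ levelOf F x, j < i := by
  unfold prevSet
  split_ifs with hi
  · rw [mem_iff_exists_levelOf_le hF]
    simp only [Nat.le_sub_one_iff_lt hi]
  · simp only [notMem_empty, false_iff]
    omega

lemma prevSet_subset (hF : Monotone F) (i : Fin k) : prevSet F i ⊆ F i := by
  intro x hx
  obtain ⟨j, hj, hji⟩ := (mem_prevSet_iff hF i).1 hx
  exact (mem_iff_exists_levelOf_le hF i).2 ⟨j, hj, hji.le⟩

lemma occE_levelOf_add_card_prevSet (hF : Monotone F) (i : Fin k) :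
    occE (levelOf F) i + (prevSet F i).card = (F i).card := by
  have hfiber : univ.filter (fun x => levelOf F x = some (i : ℕ)) = F i \ prevSet F i := by
    ext x
    rw [mem_filter, mem_sdiff, mem_iff_exists_levelOf_le hF, mem_prevSet_iff hF]
    rcases levelOf F x with _ | v
    · simp
    · simp only [mem_univ, Option.some.injEq, true_and, Option.mem_def, exists_eq_left', not_lt]
      omega
  rw [occE, hfiber, card_sdiff_add_card_eq_card (prevSet_subset hF i)]

lemma levelOf_image (σ : Equiv.Perm (Fin n)) :
    levelOf (fun i => (F i).image σ) x = levelOf F (σ⁻¹ x) := by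
  have hmem : ∀ i, x ∈ (F i).image σ ↔ σ⁻¹ x ∈ F i := fun i => by
    simp [Equiv.Perm.inv_def, ← Equiv.eq_symm_apply]
  refine Option.ext fun j => ?_
  simp only [levelOf_eq_some_iff, hmem]

variable {lev : Fin n → Option ℕ}

lemma levelOf_chainOfLevel (hlev : ∀ x j, lev x = some j → j < k) :
    levelOf (chainOfLevel lev k) = lev := by
  funext x
  refine Option.ext fun j => ?_
  simp only [levelOf_eq_some_iff, chainOfLevel, mem_filter, mem_univ, true_and]
  constructor
  · rintro ⟨hjk, ⟨v, hv, hvj⟩, hmin⟩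
    obtain rfl | hvj := hvj.eq_or_lt
    · exact hv
    · exact absurd ⟨v, hv, le_rfl⟩ (hmin v hvj (hvj.trans hjk))
  · intro hj
    refine ⟨hlev x j hj, ⟨j, hj, le_rfl⟩, fun i hij _ => ?_⟩
    rintro ⟨v, hv, hvi⟩
    rw [Option.mem_def, hj, Option.some_inj] at hv
    omega

lemma chainOfLevel_levelOf (hF : Monotone F) : chainOfLevel (levelOf F) k = F := by
  funext i
  ext x
  simp only [chainOfLevel, mem_filter, mem_univ, true_and, mem_iff_exists_levelOf_le hF]

lemma strictMono_chainOfLevel (hlev : ∀ j < k, ∃ x, lev x = some j) :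
    StrictMono (chainOfLevel lev k) := by
  intro i j hij
  refine lt_of_le_of_ne (fun x hx => ?_) fun heq => ?_
  · simp only [chainOfLevel, mem_filter, mem_univ, true_and] at hx ⊢
    obtain ⟨v, hv, hvi⟩ := hx
    exact ⟨v, hv, hvi.trans hij.le⟩
  · obtain ⟨x, hx⟩ := hlev j j.2
    have hxj : x ∈ chainOfLevel lev k j := by simp [chainOfLevel, hx]
    rw [← heq] at hxj
    obtain ⟨v, hv, hvi⟩ := (mem_filter.1 hxj).2
    rw [Option.mem_def, hx, Option.some_inj] at hv
    exact absurd hij (not_lt.2 (by omega))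

end Levels

lemma isAugFY_iff (F : Fin k → Finset (Fin n)) (a : Fin k → ℕ) :
    IsAugFY ⟨k, F, a⟩ ↔ StrictMono F ∧
      ∀ i : Fin k, 1 ≤ a i ∧ a i + (if (i : ℕ) = 0 then 0 else 1) ≤ occE (levelOf F) i := by
  unfold IsAugFY
  dsimp only
  refine and_congr_right fun hF => forall_congr' fun i => and_congr_right fun _ => ?_
  have hcard := occE_levelOf_add_card_prevSet hF.monotone i
  by_cases hi : (i : ℕ) = 0
  · have hprev : prevSet F i = ∅ := dif_neg (by omega)
    simp only [hi, if_true, hprev, card_empty] at hcard ⊢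
    omega
  · simp only [hi, if_false]
    omega

def IsLevelCode (k : ℕ) (lev : Fin n → Option ℕ) (a : ℕ → ℕ) : Prop :=
  (∀ x j, lev x = some j → j < k) ∧
  (∀ j < k, 1 ≤ a j ∧ a j + (if j = 0 then 0 else 1) ≤ occE lev j) ∧
  (∀ j, k ≤ j → a j = 0)

def LevelCode (n : ℕ) :=
  {q : ℕ × (Fin n → Option ℕ) × (ℕ → ℕ) // IsLevelCode q.1 q.2.1 q.2.2}

def extendByZero (a : Fin k → ℕ) (j : ℕ) : ℕ := if h : j < k then a ⟨j, h⟩ else 0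

lemma IsLevelCode.exists_eq_some {lev : Fin n → Option ℕ} {a : ℕ → ℕ}
    (h : IsLevelCode k lev a) {j : ℕ} (hj : j < k) : ∃ x, lev x = some j :=
  occE_pos_iff.1 (by have := h.2.1 j hj; omega)

noncomputable def AugFYBn.equivLevelCode : AugFYBn n ≃ LevelCode n where
  toFun p := ⟨(p.1.1, levelOf p.1.2.1, extendByZero p.1.2.2), by
    obtain ⟨⟨k, F, a⟩, hp⟩ := p
    obtain ⟨-, ha⟩ := (isAugFY_iff F a).1 hp
    refine ⟨fun x j => lt_of_levelOf_eq_some, fun j hj => ?_, fun j hj => dif_neg (by omega)⟩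
    simpa [extendByZero, hj] using ha ⟨j, hj⟩⟩
  invFun q := ⟨⟨q.1.1, chainOfLevel q.1.2.1 q.1.1, fun i => q.1.2.2 i⟩, by
    obtain ⟨⟨k, lev, a⟩, hq⟩ := q
    rw [isAugFY_iff, levelOf_chainOfLevel hq.1]
    exact ⟨strictMono_chainOfLevel fun j hj => hq.exists_eq_some hj, fun i => hq.2.1 i i.2⟩⟩
  left_inv p := by
    obtain ⟨⟨k, F, a⟩, hp⟩ := p
    refine Subtype.ext (Sigma.ext rfl (heq_of_eq (Prod.ext ?_ ?_)))
    · exact chainOfLevel_levelOf hp.1.monotone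
    · funext i
      exact dif_pos i.2
  right_inv q := by
    obtain ⟨⟨k, lev, a⟩, hq⟩ := q
    refine Subtype.ext (Prod.ext rfl (Prod.ext (levelOf_chainOfLevel hq.1) ?_))
    funext j
    by_cases hj : j < k
    · exact dif_pos hj
    · exact (dif_neg hj).trans (hq.2.2 j (not_lt.1 hj)).symm

section Shift

variable {α lev : Fin n → Option ℕ} {x : Fin n} {v : ℕ}

def shiftLevel (s : ℕ) (lev : Fin n → Option ℕ) : Fin n → Option ℕ :=
  fun x => (lev x).map (· + s)

-- `a` moved up `s` places and lowered by one at position `s`, where `a₀` lands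
def shiftExponents (s : ℕ) (a : ℕ → ℕ) (v : ℕ) : ℕ :=
  (if s ≤ v then a (v - s) else 0) - if v = s then 1 else 0

lemma occE_shiftLevel (s j : ℕ) : occE (shiftLevel s lev) (j + s) = occE lev j := by
  simp [occE, shiftLevel]

lemma shiftExponents_add (s : ℕ) (a : ℕ → ℕ) (j : ℕ) :
    shiftExponents s a (j + s) = a j - if j = 0 then 1 else 0 := by
  simp [shiftExponents]

lemma shiftExponents_of_lt {s : ℕ} (a : ℕ → ℕ) (h : v < s) : shiftExponents s a v = 0 := by
  simp [shiftExponents, not_le.2 h]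

lemma sum_range_shiftExponents (s : ℕ) (a : ℕ → ℕ) (k : ℕ) :
    ∑ v ∈ range (s + k), shiftExponents s a v = ∑ j ∈ range k, (a j - if j = 0 then 1 else 0) := by
  rw [sum_range_add, sum_eq_zero fun v hv => shiftExponents_of_lt a (mem_range.1 hv), zero_add]
  simp only [add_comm s, shiftExponents_add]

lemma shiftLevel_map_sub {s : ℕ} (h : ∀ x v, α x = some v → s ≤ v) :
    shiftLevel s (fun x => (α x).map (· - s)) = α := by
  funext x
  cases hx : α x with
  | none => simp [shiftLevel, hx]
  | some v => simp [shiftLevel, hx, Nat.sub_add_cancel (h x v hx)]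

def shiftOfExponents (a : ℕ → ℕ) : ℕ := if 2 ≤ a 0 then 1 else 0

lemma shiftOfExponents_cases (a : ℕ → ℕ) :
    shiftOfExponents a = 0 ∧ a 0 < 2 ∨ shiftOfExponents a = 1 ∧ 2 ≤ a 0 := by
  unfold shiftOfExponents
  split_ifs with h <;> omega

open Classical in
noncomputable def shiftOfCode (α : Fin n → Option ℕ) : ℕ := if ∃ x, α x = some 0 then 0 else 1

lemma shiftOfCode_cases (α : Fin n → Option ℕ) :
    shiftOfCode α = 0 ∧ (∃ x, α x = some 0) ∨ shiftOfCode α = 1 ∧ ∀ x, α x ≠ some 0 := by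
  unfold shiftOfCode
  split_ifs with h
  · exact Or.inl ⟨rfl, h⟩
  · exact Or.inr ⟨rfl, not_exists.1 h⟩

lemma shiftOfCode_le_one (α : Fin n → Option ℕ) : shiftOfCode α ≤ 1 := by
  rcases shiftOfCode_cases α with ⟨h, -⟩ | ⟨h, -⟩ <;> omega

lemma shiftOfCode_le (h : α x = some v) : shiftOfCode α ≤ v := by
  rcases shiftOfCode_cases α with ⟨hs, -⟩ | ⟨hs, hne⟩
  · omega
  · rcases Nat.eq_zero_or_pos v with rfl | hv
    · exact absurd h (hne x)
    · omega

def toExtCode (lev : Fin n → Option ℕ) (a : ℕ → ℕ) : (Fin n → Option ℕ) × (ℕ → ℕ) :=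
  (shiftLevel (shiftOfExponents a) lev, shiftExponents (shiftOfExponents a) a)

lemma toExtCode_none : toExtCode (fun _ : Fin n => none) 0 = (fun _ => none, 0) := by
  refine Prod.ext rfl (funext fun v => ?_)
  simp [toExtCode, shiftExponents, shiftOfExponents]

open Classical in
noncomputable def chainLength (α : Fin n → Option ℕ) : ℕ :=
  if ∀ x, α x = none then 0 else maxValE α + 1 - shiftOfCode α

noncomputable def ofExtCode (α : Fin n → Option ℕ) (f : ℕ → ℕ) :
    ℕ × (Fin n → Option ℕ) × (ℕ → ℕ) :=
  (chainLength α, fun x => (α x).map (· - shiftOfCode α),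
    fun j => if j < chainLength α then f (j + shiftOfCode α) + (if j = 0 then 1 else 0) else 0)

end Shift

namespace IsLevelCode

variable {lev : Fin n → Option ℕ} {a : ℕ → ℕ} (h : IsLevelCode k lev a)
include h

lemma eq_of_length_eq_zero (hk : k = 0) : lev = (fun _ => none) ∧ a = 0 :=
  ⟨funext fun x => Option.eq_none_iff_forall_ne_some.2 fun j hj => by
    have := h.1 x j hj
    omega, funext fun j => h.2.2 j (by omega)⟩

lemma maxValE_shiftLevel (hk : 0 < k) (s : ℕ) : maxValE (shiftLevel s lev) = k - 1 + s := by
  refine le_antisymm (maxValE_le fun x v hv => ?_) ?_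
  · obtain ⟨j, hj, rfl⟩ := Option.map_eq_some_iff.1 hv
    have := h.1 x j hj
    omega
  · obtain ⟨x, hx⟩ := h.exists_eq_some (Nat.sub_lt hk one_pos)
    exact le_maxValE (x := x) (by simp [shiftLevel, hx])

lemma isExtCode : IsExtCode (toExtCode lev a).1 (toExtCode lev a).2 := by
  obtain hk | hk := Nat.eq_zero_or_pos k
  · obtain ⟨rfl, rfl⟩ := h.eq_of_length_eq_zero hk
    have hmax : maxValE (fun _ : Fin n => (none : Option ℕ)) = 0 :=
      Nat.le_zero.1 (maxValE_le (by simp))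
    rw [toExtCode_none]
    unfold IsExtCode
    rw [hmax]
    exact ⟨fun v _ _ => by omega, fun v _ _ => by omega, fun v _ => rfl⟩
  have hmax := h.maxValE_shiftLevel hk (shiftOfExponents a)
  have ha0 := (h.2.1 0 hk).1
  have hs := shiftOfExponents_cases a
  simp only [toExtCode, IsExtCode, hmax]
  have hpos : ∀ v, 1 ≤ v → v ≤ k - 1 + shiftOfExponents a →
      2 ≤ occE (shiftLevel (shiftOfExponents a) lev) v ∧
      1 ≤ shiftExponents (shiftOfExponents a) a v ∧
      shiftExponents (shiftOfExponents a) a v ≤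
        occE (shiftLevel (shiftOfExponents a) lev) v - 1 := by
    intro v hv1 hvk
    obtain ⟨j, rfl⟩ : ∃ j, v = j + shiftOfExponents a := ⟨v - shiftOfExponents a, by omega⟩
    rw [occE_shiftLevel, shiftExponents_add]
    have hj := h.2.1 j (by omega)
    rcases eq_or_ne j 0 with rfl | hj0
    · simp only [↓reduceIte] at hj ⊢
      omega
    · simp only [hj0, if_false] at hj ⊢
      omega
  refine ⟨fun v h1 h2 => (hpos v h1 h2).1, fun v h1 h2 => (hpos v h1 h2).2, ?_⟩
  rintro v (rfl | hv)
  · rcases hs with ⟨hs, ha⟩ | ⟨hs, -⟩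
    · simp only [shiftExponents, hs, le_refl, ↓reduceIte, tsub_zero]
      omega
    · exact shiftExponents_of_lt a (by omega)
  · obtain ⟨j, rfl⟩ : ∃ j, v = j + shiftOfExponents a := ⟨v - shiftOfExponents a, by omega⟩
    rw [shiftExponents_add, h.2.2 j (by omega), zero_tsub]

lemma shiftOfCode_shiftLevel (hk : 0 < k) :
    shiftOfCode (shiftLevel (shiftOfExponents a) lev) = shiftOfExponents a := by
  obtain ⟨x₀, hx₀⟩ := h.exists_eq_some hk
  rcases shiftOfCode_cases (shiftLevel (shiftOfExponents a) lev) with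
    ⟨hc, x, hx⟩ | ⟨hc, hne⟩
  · obtain ⟨j, -, hj⟩ := Option.map_eq_some_iff.1 hx
    omega
  · have := hne x₀
    simp only [shiftLevel, hx₀, Option.map_some, ne_eq, Option.some.injEq] at this
    have := shiftOfExponents_cases a
    omega

lemma ofExtCode_toExtCode : ofExtCode (toExtCode lev a).1 (toExtCode lev a).2 = (k, lev, a) := by
  obtain hk | hk := Nat.eq_zero_or_pos k
  · obtain ⟨rfl, rfl⟩ := h.eq_of_length_eq_zero hk
    simp [ofExtCode, toExtCode, chainLength, shiftLevel, hk, Pi.zero_def]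
  obtain ⟨x₀, hx₀⟩ := h.exists_eq_some hk
  have hnone : ¬ ∀ x, shiftLevel (shiftOfExponents a) lev x = none :=
    fun hall => by simpa [shiftLevel, hx₀] using hall x₀
  have hlen : chainLength (shiftLevel (shiftOfExponents a) lev) = k := by
    rw [chainLength, if_neg hnone, h.maxValE_shiftLevel hk, h.shiftOfCode_shiftLevel hk]
    omega
  simp only [ofExtCode, toExtCode, hlen, h.shiftOfCode_shiftLevel hk, shiftExponents_add]
  refine Prod.ext rfl (Prod.ext (funext fun x => ?_) (funext fun j => ?_)) <;> dsimp only
  · simp [shiftLevel, Option.map_map, Function.comp_def]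
  · by_cases hj : j < k
    · have := (h.2.1 j hj).1
      split_ifs <;> omega
    · rw [if_neg hj, h.2.2 j (not_lt.1 hj)]

lemma extIndex_toExtCode :
    extIndex (toExtCode lev a).1 (toExtCode lev a).2 + 1 = ((∑ j ∈ range k, a j : ℕ) : ℤ) := by
  obtain hk | hk := Nat.eq_zero_or_pos k
  · obtain ⟨rfl, rfl⟩ := h.eq_of_length_eq_zero hk
    simp [extIndex, toExtCode, shiftLevel, hk]
  obtain ⟨x₀, hx₀⟩ := h.exists_eq_some hk
  have hnone : ¬ ∀ x, (toExtCode lev a).1 x = none :=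
    fun hall => by simpa [toExtCode, shiftLevel, hx₀] using hall x₀
  have hf0 := h.isExtCode.2.2 0 (Or.inl rfl)
  have hsum := sum_range_succ_eq_add_sum_Icc (toExtCode lev a).2
    (k - 1 + shiftOfExponents a)
  rw [show k - 1 + shiftOfExponents a + 1 = shiftOfExponents a + k by omega, hf0, zero_add] at hsum
  rw [extIndex, if_neg hnone, toExtCode, h.maxValE_shiftLevel hk]
  rw [toExtCode, sum_range_shiftExponents] at hsum
  rw [← hsum]
  obtain ⟨k, rfl⟩ := Nat.exists_eq_add_of_lt hk
  have := (h.2.1 0 hk).1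
  simp only [zero_add, sum_range_succ', ↓reduceIte, Nat.add_one_ne_zero, tsub_zero]
  push_cast
  omega

end IsLevelCode

lemma shiftOfCode_le_maxValE {α : Fin n → Option ℕ} (h : ¬ ∀ x, α x = none) :
    shiftOfCode α ≤ maxValE α := by
  obtain ⟨x, hx⟩ := not_forall.1 h
  obtain ⟨v, hv⟩ := Option.ne_none_iff_exists'.1 hx
  exact (shiftOfCode_le hv).trans (le_maxValE hv)

namespace IsExtCode

variable {α : Fin n → Option ℕ} {f : ℕ → ℕ} (hc : IsExtCode α f)
include hc

lemma eq_zero_of_forall_none (hall : ∀ x, α x = none) : f = 0 := by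
  have hmax : maxValE α = 0 := Nat.le_zero.1 (maxValE_le fun x v hv => by simp [hall x] at hv)
  funext v
  exact hc.2.2 v (by omega)

lemma isLevelCode_ofExtCode :
    IsLevelCode (ofExtCode α f).1 (ofExtCode α f).2.1 (ofExtCode α f).2.2 := by
  by_cases hall : ∀ x, α x = none
  · have hlen : chainLength α = 0 := if_pos hall
    refine ⟨fun x j hj => ?_, fun j hj => ?_, fun j _ => ?_⟩ <;> simp_all [ofExtCode]
  have ht := shiftOfCode_le_maxValE hall
  have hlen : chainLength α = maxValE α + 1 - shiftOfCode α := if_neg hall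
  refine ⟨fun x j hj => ?_, fun j hj => ?_, fun j hj => ?_⟩ <;> simp only [ofExtCode, hlen] at hj ⊢
  · obtain ⟨v, hv, rfl⟩ := Option.map_eq_some_iff.1 hj
    have := le_maxValE hv
    have := shiftOfCode_le hv
    omega
  · rw [if_pos hj, ← occE_shiftLevel (s := shiftOfCode α),
      shiftLevel_map_sub fun x v hv => shiftOfCode_le hv]
    by_cases hv : 1 ≤ j + shiftOfCode α
    · have := hc.1 _ hv (by omega)
      have := hc.2.1 _ hv (by omega)
      split_ifs <;> omega
    · obtain ⟨rfl, ht0⟩ : j = 0 ∧ shiftOfCode α = 0 := by omega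
      have hocc : 0 < occE α (0 + shiftOfCode α) := by
        rw [ht0, occE_pos_iff]
        rcases shiftOfCode_cases α with ⟨-, hx⟩ | ⟨h1, -⟩
        · exact hx
        · omega
      have := hc.2.2 0 (Or.inl rfl)
      simp only [ht0, add_zero, ↓reduceIte] at hocc ⊢
      omega
  · rw [if_neg (not_lt.2 hj)]

lemma toExtCode_ofExtCode : toExtCode (ofExtCode α f).2.1 (ofExtCode α f).2.2 = (α, f) := by
  by_cases hall : ∀ x, α x = none
  · have hlen : chainLength α = 0 := if_pos hall
    have hlev : (ofExtCode α f).2.1 = fun _ => none := funext fun x => by simp [ofExtCode, hall x]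
    have ha : (ofExtCode α f).2.2 = 0 := funext fun j => by simp [ofExtCode, hlen]
    rw [hlev, ha, toExtCode_none, hc.eq_zero_of_forall_none hall, funext hall]
  have ht := shiftOfCode_le_maxValE hall
  have hlen : chainLength α = maxValE α + 1 - shiftOfCode α := if_neg hall
  have hs : shiftOfExponents (ofExtCode α f).2.2 = shiftOfCode α := by
    have ha0 : (ofExtCode α f).2.2 0 = f (shiftOfCode α) + 1 := by
      simp only [ofExtCode]
      rw [if_pos (by omega)]
      simp
    rw [shiftOfExponents, ha0]
    rcases shiftOfCode_cases α with ⟨h0, -⟩ | ⟨h1, -⟩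
    · simp [h0, hc.2.2 0 (Or.inl rfl)]
    · have := (hc.2.1 1 le_rfl (by omega)).1
      rw [h1, if_pos (by omega)]
  simp only [toExtCode, hs]
  refine Prod.ext (shiftLevel_map_sub fun x v hv => shiftOfCode_le hv) (funext fun v => ?_)
  dsimp only
  by_cases hv : v < shiftOfCode α
  · have := shiftOfCode_le_one α
    rw [shiftExponents_of_lt _ hv, hc.2.2 v (by omega)]
  obtain ⟨j, rfl⟩ : ∃ j, v = j + shiftOfCode α := ⟨v - shiftOfCode α, by omega⟩
  rw [shiftExponents_add]
  by_cases hj : j < chainLength α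
  · simp only [ofExtCode, if_pos hj]
    split_ifs <;> omega
  · simp only [ofExtCode, if_neg hj, zero_tsub]
    exact (hc.2.2 _ (Or.inr (by omega))).symm

end IsExtCode

noncomputable def LevelCode.equivExtCode : LevelCode n ≃ ExtCode n where
  toFun q := ⟨toExtCode q.1.2.1 q.1.2.2, q.2.isExtCode⟩
  invFun c := ⟨ofExtCode c.1.1 c.1.2, c.2.isLevelCode_ofExtCode⟩
  left_inv q := Subtype.ext q.2.ofExtCode_toExtCode
  right_inv c := Subtype.ext c.2.toExtCode_ofExtCode

lemma sum_range_extendByZero (a : Fin k → ℕ) : ∑ j ∈ range k, extendByZero a j = ∑ i, a i := by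
  rw [← Fin.sum_univ_eq_sum_range]
  exact sum_congr rfl fun i _ => dif_pos i.2

theorem stmt9 (n : ℕ) :
    ∃ e : AugFYBn n ≃ ExtCode n,
      (∀ u : AugFYBn n,
        extIndex (e u).1.1 (e u).1.2 + 1 = (FYdeg u.1 : ℤ)) ∧
      (∀ (σ : Equiv.Perm (Fin n)) (u v : AugFYBn n), v.1 = permFY σ u.1 →
        (e v).1.1 = (e u).1.1 ∘ ⇑σ⁻¹ ∧ (e v).1.2 = (e u).1.2) := by
  refine ⟨AugFYBn.equivLevelCode.trans LevelCode.equivExtCode, fun u => ?_, fun σ u v hv => ?_⟩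
  · rw [FYdeg, ← sum_range_extendByZero]
    exact (AugFYBn.equivLevelCode u).2.extIndex_toExtCode
  · obtain ⟨⟨k, F, a⟩, hu⟩ := u
    obtain ⟨_, _⟩ := v
    subst hv
    refine ⟨funext fun x => ?_, rfl⟩
    show shiftLevel _ (levelOf fun i => (F i).image σ) x = shiftLevel _ (levelOf F) (σ⁻¹ x)
    simp only [shiftLevel, levelOf_image]
    rfl
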